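/- The infinite-volume anchored map ψ_D : T → R is continuous with respect to the product topologies: for every t ∈ T and every k, any t' ∈ T agreeing with t on all edges having an endvertex in W_k = desc_t(D_k) satisfies ψ_D(t')|_{W_k} = ψ_D(t)|_{W_k}. -/

import Mathlib

open Finset
open scoped Classical

namespace Anchored

variable {V : Type*} [DecidableEq V]

/-- iterating a partial parent map; `none` represents the sink. -/
def iterP (p : V → Option V) : ℕ → V → Option V
  | 0, v => some v
  | n + 1, v => (p v).bind (iterP p n)

/-- walks in the multigraph `a` avoiding the set `A` -/
def ReachAvoid (a : V → V → ℕ) (A : Finset V) (u v : V) : Prop :=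
  ∃ (nn : ℕ) (f : ℕ → V), f 0 = u ∧ f nn = v ∧ (∀ j ≤ nn, f j ∉ A) ∧
    ∀ j < nn, 0 < a (f j) (f (j + 1))

/-- oriented edges (with multiplicity index) from `v` into the finite set `T` -/
def edgesTo (a : V → V → ℕ) (v : V) (T : Finset V) : Finset (V × ℕ) :=
  T.biUnion fun w => (Finset.range (a v w)).image fun i => (w, i)

variable (a : V → V → ℕ) (S : Finset V) (out : V → Finset V)

/-- number of edges from `v` to the sink of the wired graph on `S`;
`out v` is the set of heads of sink edges at `v` (actual vertices of `G`). -/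
def sk (v : V) : ℕ := ∑ w ∈ out v, a v w

/-- degree of `v` in the wired graph on `S` -/
def degS (v : V) : ℕ := sk a out v + ∑ w ∈ S, a v w

variable (η : V → ℕ) (D : ℕ → Finset V) (kk : ℕ)

/-- number of global steps allotted to each phase of the anchored burning -/
def plen : ℕ := S.card + 1

/-- Flattened anchored burning process: `U m` is the set of unburnt vertices
after `m` global steps; phase `i` (for `i = 1, …, kk + 1`) occupies the steps
`m ∈ [(i-1)·plen, i·plen)` and forbids burning the vertices of `D (kk - i + 1)`.
A vertex burns when its height is at least its number of edges to unburnt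
vertices (the sink being burnt at time `0`). -/
def U : ℕ → Finset V
  | 0 => S
  | m + 1 => (U m).filter fun v =>
      v ∈ D (kk - m / plen S) ∨ η v < ∑ w ∈ U m, a v w

/-- the (anchored) burning time of `v` -/
noncomputable def τ (v : V) : ℕ := sInf {m | v ∉ U a S η D kk m}

/-- number of oriented edges from `v` whose head was burnt strictly before `v`
(including the sink edges) -/
noncomputable def mv (v : V) : ℕ :=
  sk a out v + ∑ w ∈ S \ U a S η D kk (τ a S η D kk v - 1), a v w

/-- the set of candidate tree edges at `v`: the oriented edges from `v` to the
layer burnt at the previous step (at the first step of a phase: to everything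
burnt in earlier phases, including the sink) -/
noncomputable def Fv (v : V) : Finset (V × ℕ) :=
  if (τ a S η D kk v - 1) % plen S = 0 then
    edgesTo a v (out v) ∪ edgesTo a v (S \ U a S η D kk (τ a S η D kk v - 1))
  else
    edgesTo a v
      (U a S η D kk (τ a S η D kk v - 2) \ U a S η D kk (τ a S η D kk v - 1))

/-- `Spec … prec e` says that `e` encodes the spanning tree assigned to `η` by
the anchored burning bijection: each `v ∈ S` gets the edge of `F_v` having
exactly `ℓ` predecessors in the ordering `prec v`, where
`η v = deg v - m_v + ℓ`. -/
def Spec (prec : V → (V × ℕ) → (V × ℕ) → Prop) (e : V → Option (V × ℕ)) : Prop :=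
  (∀ v ∉ S, e v = none) ∧
  ∀ v ∈ S, ∃ ed : V × ℕ, e v = some ed ∧ ed ∈ Fv a S out η D kk v ∧
    η v + mv a S out η D kk v =
      degS a S out v + ((Fv a S out η D kk v).filter fun f => prec v f ed).card

/-- the parent map (toward the sink) of an encoded spanning tree -/
def par (e : V → Option (V × ℕ)) (v : V) : Option V :=
  (e v).bind fun p => if p.1 ∈ S then some p.1 else none

/-- spanning trees of the wired graph on `S`, oriented toward the sink:
every vertex of `S` carries exactly one valid oriented edge, and following
these edges one reaches the sink. -/
def IsSpanningTree (e : V → Option (V × ℕ)) : Prop :=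
  (∀ v ∉ S, e v = none) ∧
  (∀ v ∈ S, ∃ w i, e v = some (w, i) ∧ i < a v w ∧ (w ∈ S ∨ w ∈ out v)) ∧
  (∀ v ∈ S, ∃ m, iterP (par S e) m v = none)

/-- stable configurations on the wired graph on `S` -/
def Stable : Prop := ∀ v ∈ S, η v < degS a S out v

/-- ample for every nonempty subset of `S` -/
def Ample : Prop := ∀ F ⊆ S, F.Nonempty → ∃ x ∈ F, ∑ y ∈ F, a x y ≤ η x

/-- recurrent configurations on the wired graph on `S` -/
def Recurrent : Prop := Stable a S out η ∧ Ample a S η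

end Anchored

namespace Anchored

variable {V : Type*} [DecidableEq V]

/-- the unique infinite path in the forest from `v`, followed `n` steps -/
def iterF (t : V → V × ℕ) (n : ℕ) (v : V) : V := (fun x => (t x).1)^[n] v

/-- spanning forests of `G` all of whose components are infinite one-ended
trees, encoded by the parent map toward the unique end: every vertex has one
valid oriented edge, no cycles, and every vertex has finitely many
descendants (one-endedness). -/
def IsForest (a : V → V → ℕ) (t : V → V × ℕ) : Prop :=
  (∀ v, (t v).2 < a v (t v).1) ∧
  (∀ v n, 0 < n → iterF t n v ≠ v) ∧
  (∀ v, {w | ∃ n, iterF t n w = v}.Finite)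

/-- `Rel … t η` says `η = ψ_D t`: for every `k ≥ 1`, writing
`W = desc_t (D k)`, the restriction of `η` to `W` corresponds to the
restriction of `t` to the edges of `G*_{W,k}` under the finite anchored
burning bijection of `G*_{W,k}` (whose sink edges join `D k` to `V \ W`). -/
def Rel (a : V → V → ℕ) (nbrs : V → Finset V) (D : ℕ → Finset V)
    (prec : V → (V × ℕ) → (V × ℕ) → Prop) (t : V → V × ℕ) (η : V → ℕ) : Prop :=
  ∀ kk, 1 ≤ kk → ∀ W : Finset V,
    (∀ x, x ∈ W ↔ ∃ n, iterF t n x ∈ D kk) →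
    Spec a W (fun v => if v ∈ D kk then nbrs v \ W else ∅) η D kk prec
      (fun v => if v ∈ W then some (t v) else none)

end Anchored

/-!
If `t'` agrees with `t` on the edges meeting `W = desc_t (D k)`, then `t' = t` on `W`: at a
vertex of `W` where they differ, the `t'`-edge is a reversed `t`-edge, so the `t'`-path from
there runs without repetition through `t`-descendants of that vertex, contradicting
one-endedness. Hence `W = desc_{t'} (D k)` too, and `ψ_D t`, `ψ_D t'` restricted to `W` are
sent to the same spanning tree of `G*_{W,k}` by the finite anchored burning map.

That map is injective: the tree and the burning process determine `η v` as the number of edges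
from `v` to vertices unburnt just before `v` burns, plus the rank of the tree edge of `v`. The
two burning processes coincide, by induction on the step: if `v` burns at step `m + 1` for `η`
but later for `η'`, either `v` burns for `η'` in mid-phase, and its tree edge would point both
out of and into the common unburnt set at step `m`, or it burns at the start of a phase, which
(a phase being long enough to stabilise) only happens to vertices forbidden in the previous
phase, whereas `v` was not forbidden at step `m`.
-/

lemma Finset.isFixedPt_iterate_of_card_le {α : Type*} {f : Finset α → Finset α}
    (hf : ∀ X, f X ⊆ X) (X : Finset α) {n : ℕ} (hn : #X ≤ n) :
    Function.IsFixedPt f (f^[n] X) := by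
  have key : ∀ n, Function.IsFixedPt f (f^[n] X) ∨ #(f^[n] X) + n ≤ #X := by
    intro n
    induction n with
    | zero => simp
    | succ n ih =>
      rw [Function.iterate_succ_apply']
      by_cases hfix : Function.IsFixedPt f (f^[n] X)
      · exact .inl (congrArg f hfix)
      · have := card_lt_card ((hf _).ssubset_of_ne hfix)
        have := ih.resolve_left hfix
        omega
  refine (key n).elim id fun hcard => ?_
  rw [card_eq_zero.mp (by omega : #(f^[n] X) = 0)]
  exact subset_empty.mp (hf ∅)

namespace Anchored

variable {V : Type*}

section Burning

variable [DecidableEq V]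

lemma fst_mem_of_mem_edgesTo {a : V → V → ℕ} {v : V} {T : Finset V} {ed : V × ℕ}
    (h : ed ∈ edgesTo a v T) : ed.1 ∈ T := by
  obtain ⟨w, hw, i, -, rfl⟩ := by simpa only [edgesTo, mem_biUnion, mem_image] using h
  exact hw

def burnStep (a : V → V → ℕ) (η : V → ℕ) (F X : Finset V) : Finset V :=
  X.filter fun v => v ∈ F ∨ η v < ∑ w ∈ X, a v w

variable {a : V → V → ℕ} {S : Finset V} {η : V → ℕ} {D : ℕ → Finset V} {kk : ℕ}

lemma U_succ (m : ℕ) :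
    U a S η D kk (m + 1) = burnStep a η (D (kk - m / plen S)) (U a S η D kk m) := rfl

lemma U_subset (m : ℕ) : U a S η D kk m ⊆ S := by
  induction m with
  | zero => exact subset_rfl
  | succ m ih => exact (filter_subset _ _).trans ih

lemma U_antitone : Antitone (U a S η D kk) :=
  antitone_nat_of_succ_le fun _ => filter_subset _ _

lemma notMem_U_succ_iff {m : ℕ} {v : V} (hv : v ∈ U a S η D kk m) :
    v ∉ U a S η D kk (m + 1) ↔
      v ∉ D (kk - m / plen S) ∧ ∑ w ∈ U a S η D kk m, a v w ≤ η v := by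
  simp [U_succ, burnStep, hv]

omit [DecidableEq V] in
lemma card_lt_plen : #S < plen S := Nat.lt_succ_self _

omit [DecidableEq V] in
lemma plen_pos : 0 < plen S := Nat.succ_pos _

lemma U_phase (i : ℕ) {s : ℕ} (hs : s ≤ plen S) :
    U a S η D kk (plen S * i + s) =
      (burnStep a η (D (kk - i)))^[s] (U a S η D kk (plen S * i)) := by
  induction s with
  | zero => rfl
  | succ s ih =>
    rw [← add_assoc, U_succ, ih (by omega), Function.iterate_succ_apply',
      Nat.mul_add_div plen_pos, Nat.div_eq_of_lt (by omega), add_zero]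

/-- A phase has more steps than there are vertices, so its last step burns nothing. -/
lemma U_phase_end (i : ℕ) :
    U a S η D kk (plen S * i + plen S) = U a S η D kk (plen S * i + #S) := by
  rw [U_phase i le_rfl, U_phase i (Nat.le_succ _), plen, Function.iterate_succ_apply']
  exact Finset.isFixedPt_iterate_of_card_le (fun _ => filter_subset _ _) _
    (card_le_card (U_subset _))

/-- A vertex burning at the first step of a phase was forbidden during the previous phase, which
starts at step `plen S * i` and forbids `D (kk - i)`. -/
lemma mem_D_of_burn_phase_start {i : ℕ} {v : V}
    (hv : v ∈ U a S η D kk (plen S * (i + 1)))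
    (hburn : v ∉ U a S η D kk (plen S * (i + 1) + 1)) : v ∈ D (kk - i) := by
  have hle := ((notMem_U_succ_iff hv).mp hburn).2
  rw [mul_add_one, U_phase_end] at hle
  have hdiv : (plen S * i + #S) / plen S = i := by
    rw [Nat.mul_add_div plen_pos, Nat.div_eq_of_lt card_lt_plen, add_zero]
  rw [show plen S * (i + 1) = plen S * i + #S + 1 from mul_add_one _ _, U_succ, hdiv] at hv
  exact (mem_filter.mp hv).2.resolve_right hle.not_gt

lemma τ_eq_succ {m : ℕ} {v : V} (hv : v ∈ U a S η D kk m)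
    (hburn : v ∉ U a S η D kk (m + 1)) : τ a S η D kk v = m + 1 := by
  refine le_antisymm (Nat.sInf_le hburn) (Nat.succ_le_of_lt ?_)
  by_contra! hle
  exact Nat.sInf_mem (s := {m | v ∉ U a S η D kk m}) ⟨_, hburn⟩ (U_antitone hle hv)

lemma mem_U_of_lt_τ {m : ℕ} {v : V} (hm : m < τ a S η D kk v) : v ∈ U a S η D kk m :=
  not_not.mp (Nat.notMem_of_lt_sInf hm)

variable {out : V → Finset V} {prec : V → (V × ℕ) → (V × ℕ) → Prop}
  {e : V → Option (V × ℕ)}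

lemma fst_notMem_U_of_mem_Fv (hout : ∀ v w, w ∈ out v → w ∉ S) {v : V} {ed : V × ℕ}
    (hed : ed ∈ Fv a S out η D kk v) : ed.1 ∉ U a S η D kk (τ a S η D kk v - 1) := by
  unfold Fv at hed
  split_ifs at hed
  · rcases mem_union.mp hed with hed | hed
    · exact fun hU => hout v _ (fst_mem_of_mem_edgesTo hed) (U_subset _ hU)
    · exact (mem_sdiff.mp (fst_mem_of_mem_edgesTo hed)).2
  · exact (mem_sdiff.mp (fst_mem_of_mem_edgesTo hed)).2

lemma fst_mem_U_of_mem_Fv {v : V} {ed : V × ℕ} (hr : (τ a S η D kk v - 1) % plen S ≠ 0)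
    (hed : ed ∈ Fv a S out η D kk v) : ed.1 ∈ U a S η D kk (τ a S η D kk v - 2) := by
  rw [Fv, if_neg hr] at hed
  exact (mem_sdiff.mp (fst_mem_of_mem_edgesTo hed)).1

lemma Spec.eq_sum_add_card (h : Spec a S out η D kk prec e) {v : V} (hv : v ∈ S)
    {ed : V × ℕ} (hed : e v = some ed) :
    η v = ∑ w ∈ U a S η D kk (τ a S η D kk v - 1), a v w +
      #((Fv a S out η D kk v).filter fun f => prec v f ed) := by
  obtain ⟨ed', hed', -, heq⟩ := h.2 v hv
  obtain rfl : ed' = ed := Option.some.inj (hed'.symm.trans hed)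
  rw [mv, degS, ← sum_sdiff (f := a v) (s₁ := U a S η D kk (τ a S η D kk v - 1)) (U_subset _)]
    at heq
  omega

/-- Every vertex eventually burns: in the last phase nothing is forbidden, and a vertex that
never burns would satisfy `η v ≥ ∑ w ∈ S, a v w` by the `Spec` equation (with `τ v = 0`). -/
lemma Spec.exists_notMem_U (h : Spec a S out η D kk prec e) (hD0 : D 0 = ∅) {v : V}
    (hv : v ∈ S) : ∃ m, v ∉ U a S η D kk m := by
  by_contra! hall
  obtain ⟨ed, hed, -⟩ := h.2 v hv
  have hτ : τ a S η D kk v = 0 := by simp [τ, hall]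
  have heq := h.eq_sum_add_card hv hed
  rw [hτ] at heq
  have hlast := hall (plen S * kk + 1)
  rw [U_succ, Nat.mul_div_cancel_left _ plen_pos, Nat.sub_self, hD0] at hlast
  have hlt := (mem_filter.mp hlast).2.resolve_left (notMem_empty v)
  have := sum_le_sum_of_subset (f := a v) (s := U a S η D kk (plen S * kk)) (U_subset _)
  simp only [zero_tsub] at heq
  change η v = ∑ w ∈ S, a v w + _ at heq
  omega

lemma notMem_U_succ_of_spec {η' : V → ℕ} (hmono : Monotone D) (hD0 : D 0 = ∅)
    (hout : ∀ v w, w ∈ out v → w ∉ S)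
    (h : Spec a S out η D kk prec e) (h' : Spec a S out η' D kk prec e) {m : ℕ}
    (hU : U a S η D kk m = U a S η' D kk m) {v : V} (hv : v ∈ U a S η D kk m)
    (hburn : v ∉ U a S η D kk (m + 1)) : v ∉ U a S η' D kk (m + 1) := by
  intro hv'
  have hvS := U_subset m hv
  have hvD := ((notMem_U_succ_iff hv).mp hburn).1
  obtain ⟨ed, hed, hFv, -⟩ := h.2 v hvS
  obtain ⟨ed', hed', hFv', -⟩ := h'.2 v hvS
  obtain rfl : ed' = ed := Option.some.inj (hed'.symm.trans hed)
  set τ' := τ a S η' D kk v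
  have hτ'burn : v ∉ U a S η' D kk τ' := Nat.sInf_mem (h'.exists_notMem_U hD0 hvS)
  have hτ' : m + 2 ≤ τ' := by
    by_contra! hlt
    exact hτ'burn (U_antitone (Nat.le_of_lt_succ hlt) hv')
  by_cases hr : (τ' - 1) % plen S = 0
  · -- `v` burns at the start of a phase, so it was forbidden at step `m`
    have hq := Nat.div_add_mod (τ' - 1) (plen S)
    rw [hr, add_zero] at hq
    obtain ⟨i, hi⟩ : ∃ i, (τ' - 1) / plen S = i + 1 :=
      Nat.exists_eq_add_one.mpr (Nat.pos_of_ne_zero fun h0 => by rw [h0] at hq; omega)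
    rw [hi] at hq
    have hvD' : v ∈ D (kk - i) := by
      refine mem_D_of_burn_phase_start ?_ (by rwa [hq, Nat.sub_add_cancel (by omega)])
      rw [hq]
      exact mem_U_of_lt_τ (by omega)
    have hmi : m / plen S < i + 1 :=
      (Nat.div_lt_iff_lt_mul plen_pos).mpr (by rw [mul_comm]; omega)
    exact hvD (hmono (by omega) hvD')
  · -- the tree edge of `v` would point both out of and into `U m`
    have hin := fst_mem_U_of_mem_Fv hr hFv'
    have hnin := fst_notMem_U_of_mem_Fv hout hFv
    rw [τ_eq_succ hv hburn, Nat.add_sub_cancel, hU] at hnin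
    exact hnin (U_antitone (by omega) hin)

lemma U_eq_of_spec {η' : V → ℕ} (hmono : Monotone D) (hD0 : D 0 = ∅)
    (hout : ∀ v w, w ∈ out v → w ∉ S)
    (h : Spec a S out η D kk prec e) (h' : Spec a S out η' D kk prec e) :
    U a S η D kk = U a S η' D kk := by
  funext m
  induction m with
  | zero => rfl
  | succ m ih =>
    ext v
    by_cases hv : v ∈ U a S η D kk m
    · refine ⟨fun hv₁ => ?_, fun hv₁ => ?_⟩
      · by_contra hv₁'
        exact notMem_U_succ_of_spec hmono hD0 hout h' h ih.symm (ih ▸ hv) hv₁' hv₁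
      · by_contra hv₁'
        exact notMem_U_succ_of_spec hmono hD0 hout h h' ih hv hv₁' hv₁
    · exact iff_of_false (fun h₁ => hv (filter_subset _ _ h₁))
        (fun h₁ => hv (ih ▸ filter_subset _ _ h₁))

lemma Spec.eqOn {η' : V → ℕ} (hmono : Monotone D) (hD0 : D 0 = ∅)
    (hout : ∀ v w, w ∈ out v → w ∉ S)
    (h : Spec a S out η D kk prec e) (h' : Spec a S out η' D kk prec e) :
    ∀ v ∈ S, η v = η' v := by
  intro v hv
  have hU := U_eq_of_spec hmono hD0 hout h h'
  obtain ⟨ed, hed, -⟩ := h.2 v hv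
  have hτ : τ a S η D kk v = τ a S η' D kk v := by unfold τ; rw [hU]
  have hFv : Fv a S out η D kk v = Fv a S out η' D kk v := by unfold Fv; rw [hτ, hU]
  rw [h.eq_sum_add_card hv hed, h'.eq_sum_add_card hv hed, hτ, hFv, hU]

end Burning

section Forest

variable {t t' : V → V × ℕ} {W A : Finset V}

lemma iterF_succ (n : ℕ) (v : V) : iterF t (n + 1) v = iterF t n (t v).1 := rfl

lemma iterF_succ' (n : ℕ) (v : V) : iterF t (n + 1) v = (t (iterF t n v)).1 :=
  Function.iterate_succ_apply' _ n v

lemma iterF_injective (hacyc : ∀ v n, 0 < n → iterF t n v ≠ v) (v : V) :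
    Function.Injective (iterF t · v) := by
  have hne : ∀ r s, r < s → iterF t r v ≠ iterF t s v := fun r s hrs heq =>
    hacyc (iterF t r v) (s - r) (by omega) <| by
      simp only [iterF, ← Function.iterate_add_apply, Nat.sub_add_cancel hrs.le]
      exact heq.symm
  intro r s hrs
  by_contra hrs'
  rcases Nat.lt_or_gt_of_ne hrs' with h | h
  exacts [hne r s h hrs, hne s r h hrs.symm]

lemma fst_fst_ne (hacyc : ∀ v n, 0 < n → iterF t n v ≠ v) (u : V) : (t (t u).1).1 ≠ u :=
  hacyc u 2 two_pos

def EdgesAgreeOn (W : Finset V) (t t' : V → V × ℕ) : Prop :=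
  ∀ (v w : V) (i : ℕ), v ∈ W ∨ w ∈ W →
    ((t v = (w, i) ∨ t w = (v, i)) ↔ (t' v = (w, i) ∨ t' w = (v, i)))

lemma EdgesAgreeOn.eq_of_ne (hagree : EdgesAgreeOn W t t') {u : V} (hu : u ∈ W ∨ (t' u).1 ∈ W)
    (hne : t' u ≠ t u) : t (t' u).1 = (u, (t' u).2) :=
  ((hagree u _ _ hu).mpr (.inl rfl)).resolve_left hne.symm

lemma EdgesAgreeOn.eqOn (hfin : ∀ v, {w | ∃ n, iterF t n w = v}.Finite)
    (hacyc' : ∀ v n, 0 < n → iterF t' n v ≠ v) (hW : ∀ x, x ∈ W ↔ ∃ n, iterF t n x ∈ A)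
    (hagree : EdgesAgreeOn W t t') : ∀ v ∈ W, t' v = t v := by
  intro v hv
  by_contra hne
  have step : ∀ u ∈ W, t' u ≠ t u →
      (t' u).1 ∈ W ∧ t' (t' u).1 ≠ t (t' u).1 ∧ (t (t' u).1).1 = u := by
    intro u hu hne
    have hchild := hagree.eq_of_ne (.inl hu) hne
    refine ⟨?_, fun h => fst_fst_ne hacyc' u (by rw [h, hchild]), by rw [hchild]⟩
    obtain ⟨n, hn⟩ := (hW u).mp hu
    exact (hW _).mpr ⟨n + 1, by rwa [iterF_succ, hchild]⟩
  have path : ∀ r, iterF t' r v ∈ W ∧ t' (iterF t' r v) ≠ t (iterF t' r v) ∧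
      iterF t r (iterF t' r v) = v := by
    intro r
    induction r with
    | zero => exact ⟨hv, hne, rfl⟩
    | succ r ih =>
      obtain ⟨hmem, hne', hparent⟩ := step _ ih.1 ih.2.1
      rw [iterF_succ']
      exact ⟨hmem, hne', by rw [iterF_succ, hparent]; exact ih.2.2⟩
  exact (hfin v).not_infinite <|
    Set.infinite_of_injective_forall_mem (iterF_injective hacyc' v) fun r => ⟨r, (path r).2.2⟩

lemma EdgesAgreeOn.mem_iff (hfin : ∀ v, {w | ∃ n, iterF t n w = v}.Finite)
    (hacyc' : ∀ v n, 0 < n → iterF t' n v ≠ v) (hW : ∀ x, x ∈ W ↔ ∃ n, iterF t n x ∈ A)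
    (hagree : EdgesAgreeOn W t t') : ∀ x, x ∈ W ↔ ∃ n, iterF t' n x ∈ A := by
  have heq := hagree.eqOn hfin hacyc' hW
  have hparent : ∀ z, (t' z).1 ∈ W → z ∈ W := by
    intro z hz
    by_cases hsame : t' z = t z
    · obtain ⟨n, hn⟩ := (hW _).mp hz
      exact (hW z).mpr ⟨n + 1, by rwa [iterF_succ, ← hsame]⟩
    · exact absurd (by rw [heq _ hz, hagree.eq_of_ne (.inr hz) hsame])
        (fst_fst_ne hacyc' z)
  intro x
  constructor
  · intro hx
    obtain ⟨n, hn⟩ := (hW x).mp hx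
    refine ⟨n, ?_⟩
    induction n generalizing x with
    | zero => exact hn
    | succ n ih =>
      rw [iterF_succ, heq x hx]
      exact ih _ ((hW _).mpr ⟨n, hn⟩) hn
  · rintro ⟨n, hn⟩
    induction n generalizing x with
    | zero => exact (hW x).mpr ⟨0, hn⟩
    | succ n ih => exact hparent x (ih _ hn)

end Forest

end Anchored

theorem stmt8_general {V : Type*} [DecidableEq V]
    (a : V → V → ℕ) (nbrs : V → Finset V)
    (D : ℕ → Finset V) (hmono : Monotone D) (hD0 : D 0 = ∅)
    (prec : V → (V × ℕ) → (V × ℕ) → Prop)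
    (t t' : V → V × ℕ) (ht : Anchored.IsForest a t) (ht' : Anchored.IsForest a t')
    (kk : ℕ) (hkk : 1 ≤ kk)
    (W : Finset V) (hW : ∀ x, x ∈ W ↔ ∃ n, Anchored.iterF t n x ∈ D kk)
    (hagree : ∀ (v w : V) (i : ℕ), v ∈ W ∨ w ∈ W →
      ((t v = (w, i) ∨ t w = (v, i)) ↔ (t' v = (w, i) ∨ t' w = (v, i))))
    (η η' : V → ℕ)
    (hrel : Anchored.Rel a nbrs D prec t η)
    (hrel' : Anchored.Rel a nbrs D prec t' η') :
    ∀ v ∈ W, η v = η' v := by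
  have heq := Anchored.EdgesAgreeOn.eqOn ht.2.2 ht'.2.1 hW hagree
  have hW' := Anchored.EdgesAgreeOn.mem_iff ht.2.2 ht'.2.1 hW hagree
  have htree : (fun v => if v ∈ W then some (t' v) else none) =
      fun v => if v ∈ W then some (t v) else none := by
    funext v
    split_ifs with hv
    · rw [heq v hv]
    · rfl
  have hspec' := hrel' kk hkk W hW'
  rw [htree] at hspec'
  refine Anchored.Spec.eqOn hmono hD0 (fun v w hw => ?_) (hrel kk hkk W hW) hspec'
  split_ifs at hw
  exacts [(mem_sdiff.mp hw).2, absurd hw (notMem_empty w)]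

/-- The infinite-volume anchored map `ψ_D` is continuous:
for every `t ∈ T` and every `k ≥ 1`, any `t' ∈ T` agreeing with `t` on all
(unoriented, indexed) edges having an endvertex in `W_k = desc_t (D k)`
satisfies `ψ_D t' = ψ_D t` on `W_k`. -/
theorem stmt8 {V : Type*} [DecidableEq V] [Infinite V]
    (a : V → V → ℕ) (nbrs : V → Finset V)
    (hsymm : ∀ u v, a u v = a v u) (hloop : ∀ v, a v v = 0)
    (hnbrs : ∀ v w, w ∈ nbrs v ↔ 0 < a v w)
    (hlf : ∀ v, {w | 0 < a v w}.Finite)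
    (hconn : ∀ u v : V, Anchored.ReachAvoid a ∅ u v)
    (D : ℕ → Finset V) (hmono : Monotone D) (hD0 : D 0 = ∅)
    (hcover : ∀ v, ∃ j, v ∈ D j)
    (hsc : ∀ j, 1 ≤ j → ∀ v ∉ D j, {w | Anchored.ReachAvoid a (D j) v w}.Infinite)
    (prec : V → (V × ℕ) → (V × ℕ) → Prop)
    (hprec : ∀ v, IsStrictTotalOrder (V × ℕ) (prec v))
    (t t' : V → V × ℕ) (ht : Anchored.IsForest a t) (ht' : Anchored.IsForest a t')
    (kk : ℕ) (hkk : 1 ≤ kk)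
    (W : Finset V) (hW : ∀ x, x ∈ W ↔ ∃ n, Anchored.iterF t n x ∈ D kk)
    (hagree : ∀ (v w : V) (i : ℕ), v ∈ W ∨ w ∈ W →
      ((t v = (w, i) ∨ t w = (v, i)) ↔ (t' v = (w, i) ∨ t' w = (v, i))))
    (η η' : V → ℕ)
    (hrel : Anchored.Rel a nbrs D prec t η)
    (hrel' : Anchored.Rel a nbrs D prec t' η') :
    ∀ v ∈ W, η v = η' v :=
  stmt8_general a nbrs D hmono hD0 prec t t' ht ht' kk hkk W hW hagree η η' hrel hrel'
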